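/- Let M be an ℝ≥0-module admitting a semi-basis and let W be a nontrivial real vector space. If u, ū ∈ M satisfy f(u) = f(ū) for every semi-linear map f : M → W, then u = ū. -/

import Mathlib

/-!
Over `ℝ≥0` every nonzero coefficient is positive, so in a nonzero module a semi-basis is a basis
in the sense of `Module.Basis`: the only representation of `0` is the empty one, since adding any
other one to the representation of a nonzero element would contradict uniqueness. The coordinate
functionals of a basis, scaled by a nonzero vector of `W`, are semi-linear maps into `W`, and
together they separate points.
-/
open scoped NNReal

/-- A subset `B` of an `ℝ≥0`-module `M` (a complete semi-vector space over `ℝ⁺`)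
is a *semi-basis* if every nonzero `m : M` can be written in exactly one way as
`m = ∑ b ∈ t, c b • b` with `t` a nonempty finite subset of `B` and strictly
positive coefficients `c b`. -/
def IsSemiBasis {M : Type*} [AddCommMonoid M] [Module ℝ≥0 M] (B : Set M) : Prop :=
  ∀ m : M, m ≠ 0 →
    (∃ (t : Finset M) (c : M → ℝ≥0),
        t.Nonempty ∧ ↑t ⊆ B ∧ (∀ b ∈ t, 0 < c b) ∧ m = ∑ b ∈ t, c b • b) ∧
    ∀ (t t' : Finset M) (c c' : M → ℝ≥0),
      t.Nonempty → ↑t ⊆ B → (∀ b ∈ t, 0 < c b) → m = ∑ b ∈ t, c b • b →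
      t'.Nonempty → ↑t' ⊆ B → (∀ b ∈ t', 0 < c' b) → m = ∑ b ∈ t', c' b • b →
      t = t' ∧ ∀ b ∈ t, c b = c' b

open Finsupp Submodule

namespace IsSemiBasis

variable {M : Type*} [AddCommMonoid M] [Module ℝ≥0 M] {B : Set M}

theorem span_eq_top (hB : IsSemiBasis B) : span ℝ≥0 B = ⊤ := by
  refine eq_top_iff'.2 fun m => ?_
  rcases eq_or_ne m 0 with rfl | hm
  · exact zero_mem _
  obtain ⟨t, c, -, htB, -, rfl⟩ := (hB m hm).1
  exact sum_mem fun b hb => smul_mem _ _ (subset_span (htB hb))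

theorem eq_of_linearCombination_eq_of_ne_zero (hB : IsSemiBasis B) {f g : M →₀ ℝ≥0}
    (hf : f ∈ supported ℝ≥0 ℝ≥0 B) (hg : g ∈ supported ℝ≥0 ℝ≥0 B)
    (hfg : linearCombination ℝ≥0 id f = linearCombination ℝ≥0 id g)
    (hne : linearCombination ℝ≥0 id f ≠ 0) : f = g := by
  have support_nonempty {h : M →₀ ℝ≥0} (hh : linearCombination ℝ≥0 id h ≠ 0) :
      h.support.Nonempty :=
    Finsupp.support_nonempty_iff.2 fun h0 => hh (by simp [h0])
  obtain ⟨hsupp, hcoeff⟩ := (hB _ hne).2 f.support g.support f g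
    (support_nonempty hne) hf (fun b hb => pos_iff_ne_zero.2 (mem_support_iff.1 hb))
    (linearCombination_apply _ _)
    (support_nonempty (hfg ▸ hne)) hg (fun b hb => pos_iff_ne_zero.2 (mem_support_iff.1 hb))
    (hfg.trans (linearCombination_apply _ _))
  exact Finsupp.ext_iff'.2 ⟨hsupp, hcoeff⟩

theorem eq_zero_of_linearCombination_eq_zero [Nontrivial M] (hB : IsSemiBasis B)
    {f : M →₀ ℝ≥0} (hf : f ∈ supported ℝ≥0 ℝ≥0 B) (h0 : linearCombination ℝ≥0 id f = 0) :
    f = 0 := by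
  obtain ⟨x, hx⟩ := exists_ne (0 : M)
  have hxB : x ∈ span ℝ≥0 (id '' B) := by simp [hB.span_eq_top]
  obtain ⟨g, hg, rfl⟩ := (mem_span_image_iff_linearCombination ℝ≥0).1 hxB
  have : g + f = g :=
    hB.eq_of_linearCombination_eq_of_ne_zero (add_mem hg hf) hg (by simp [h0]) (by simpa [h0])
  simpa using this

theorem linearIndepOn [Nontrivial M] (hB : IsSemiBasis B) : LinearIndepOn ℝ≥0 id B := by
  refine linearIndepOn_iffₛ.2 fun f hf g hg hfg => ?_
  rcases eq_or_ne (linearCombination ℝ≥0 id f) 0 with h0 | hne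
  · rw [hB.eq_zero_of_linearCombination_eq_zero hf h0,
      hB.eq_zero_of_linearCombination_eq_zero hg (hfg ▸ h0)]
  · exact hB.eq_of_linearCombination_eq_of_ne_zero hf hg hfg hne

noncomputable def basis [Nontrivial M] (hB : IsSemiBasis B) : Module.Basis B ℝ≥0 M :=
  .mk hB.linearIndepOn (by simp [hB.span_eq_top])

end IsSemiBasis

theorem Module.Basis.eq_of_forall_semilinear_eq {ι M W : Type*} [AddCommMonoid M]
    [Module ℝ≥0 M] [AddCommGroup W] [Module ℝ W] [Nontrivial W] (b : Module.Basis ι ℝ≥0 M)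
    {u u' : M}
    (h : ∀ f : M → W, (∀ x y : M, f (x + y) = f x + f y) →
      (∀ r : ℝ≥0, 0 < r → ∀ x : M, f (r • x) = (r : ℝ) • f x) → f u = f u') :
    u = u' := by
  obtain ⟨w, hw⟩ := exists_ne (0 : W)
  refine b.ext_elem fun i => NNReal.coe_injective <| smul_left_injective ℝ hw ?_
  exact h (fun m => (b.repr m i : ℝ) • w) (fun x y => by simp [add_smul])
    (fun r _ x => by simp [mul_smul])

/-- Semi-linear maps into a nontrivial real vector space separate points of a semi-free
complete semi-vector space: if `f u = f u'` for every semi-linear `f : M → W`,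
then `u = u'`. -/
theorem semiLinear_separating {M W : Type*} [AddCommMonoid M] [Module ℝ≥0 M]
    [AddCommGroup W] [Module ℝ W] [Nontrivial W] {B : Set M} (hB : IsSemiBasis B)
    (u u' : M)
    (h : ∀ f : M → W, (∀ x y : M, f (x + y) = f x + f y) →
      (∀ r : ℝ≥0, 0 < r → ∀ x : M, f (r • x) = (r : ℝ) • f x) → f u = f u') :
    u = u' := by
  cases subsingleton_or_nontrivial M with
  | inl _ => exact Subsingleton.elim u u'
  | inr _ => exact hB.basis.eq_of_forall_semilinear_eq h
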